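/- arXiv:1908.01034 — 5 statements merged into one kernel-verified Lean document; each statement's English description precedes it below -/
import Mathlib

section
/- Let k be a positive natural number. For all real x with 0 < x < (2k+1)/(2k), the quantity -k·log x - (1/2)·log(1 - 2k(x-1)) is at most 2k²(x-1)²·(1/x + 1/(1 - 2k(x-1))). -/
/-!
Bound both logarithms by their tangent lines, `-log t ≤ 1/t - 1`. With `y = 1 - 2k(x - 1)`, the
resulting rational function `k(1/x - 1) + (1/y - 1)/2` falls short of the right-hand side by
exactly `k(2k - 1)(x - 1)²/x`, which is nonnegative as soon as `k ≥ 1/2`.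
-/

open Real

theorem one_sub_two_mul_mul_sub_one_pos {k x : ℝ} (hk : 0 < k) (hx : x < (2 * k + 1) / (2 * k)) :
    0 < 1 - 2 * k * (x - 1) := by
  have := (lt_div_iff₀ (by positivity : (0 : ℝ) < 2 * k)).mp hx
  linarith

theorem two_mul_sq_mul_sq_mul_add_one_div_sub_eq (k x : ℝ) (hx : x ≠ 0)
    (hy : 1 - 2 * k * (x - 1) ≠ 0) :
    2 * k ^ 2 * (x - 1) ^ 2 * (1 / x + 1 / (1 - 2 * k * (x - 1))) -
        (k * (1 / x - 1) + 1 / 2 * (1 / (1 - 2 * k * (x - 1)) - 1)) =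
      k * (2 * k - 1) * (x - 1) ^ 2 / x := by
  field_simp
  ring

theorem tangent_sum_le_two_mul_sq_mul_sq_mul_add_one_div {k x : ℝ} (hk : 1 / 2 ≤ k) (hx : 0 < x)
    (hy : 1 - 2 * k * (x - 1) ≠ 0) :
    k * (1 / x - 1) + 1 / 2 * (1 / (1 - 2 * k * (x - 1)) - 1) ≤
      2 * k ^ 2 * (x - 1) ^ 2 * (1 / x + 1 / (1 - 2 * k * (x - 1))) := by
  have gap : 0 ≤ k * (2 * k - 1) * (x - 1) ^ 2 / x := by
    have : 0 ≤ 2 * k - 1 := by linarith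
    positivity
  rw [← two_mul_sq_mul_sq_mul_add_one_div_sub_eq k x hx.ne' hy] at gap
  linarith

theorem neg_log_le_one_div_sub_one {t : ℝ} (ht : 0 < t) : -log t ≤ 1 / t - 1 := by
  rw [one_div]
  linarith [one_sub_inv_le_log_of_pos ht]

theorem neg_log_bound_left (k : ℕ) (hk : 0 < k) (x : ℝ) (hx0 : 0 < x)
    (hx1 : x < (2 * (k : ℝ) + 1) / (2 * (k : ℝ))) :
    -(k : ℝ) * Real.log x - (1 / 2) * Real.log (1 - 2 * (k : ℝ) * (x - 1)) ≤
      2 * (k : ℝ) ^ 2 * (x - 1) ^ 2 * (1 / x + 1 / (1 - 2 * (k : ℝ) * (x - 1))) := by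
  have hk1 : (1 : ℝ) ≤ k := by exact_mod_cast hk
  have hy := one_sub_two_mul_mul_sub_one_pos (by positivity) hx1
  calc -(k : ℝ) * log x - (1 / 2) * log (1 - 2 * (k : ℝ) * (x - 1))
      = k * -log x + 1 / 2 * -log (1 - 2 * (k : ℝ) * (x - 1)) := by ring
    _ ≤ k * (1 / x - 1) + 1 / 2 * (1 / (1 - 2 * (k : ℝ) * (x - 1)) - 1) := by
        gcongr
        · exact neg_log_le_one_div_sub_one hx0
        · exact neg_log_le_one_div_sub_one hy
    _ ≤ 2 * (k : ℝ) ^ 2 * (x - 1) ^ 2 * (1 / x + 1 / (1 - 2 * (k : ℝ) * (x - 1))) :=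
        tangent_sum_le_two_mul_sq_mul_sq_mul_add_one_div (by linarith) hx0 hy.ne'
end

section
/- Let k be a positive natural number. For all real x with x > (2k-1)/(2k), the quantity k·log x - (1/2)·log(1 - 2k(1-x)) is at most k²(1-x)²·(1 + 1/(1 - 2k(1-x))). -/
/-! With `t = 1 - x` and `s = 1 - 2kt`, the bound `log x ≤ x - 1` reduces the claim to an upper
bound on `-log s`. For `s ≥ 1` the same bound `-log s = log s⁻¹ ≤ s⁻¹ - 1` suffices; for `s < 1` it
is too weak, and the sharper `u ≤ sinh u` at `u = -log s ≥ 0` gives `-log s ≤ (s⁻¹ - s) / 2`.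
After clearing denominators, the left side becomes `2k²t²/s` in the first case and `k²t²/s` in the
second, and both are at most `k²t²(1 + 1/s)`. -/

open Real

lemma neg_log_le_inv_sub_self_div_two {s : ℝ} (hs : 0 < s) (hs1 : s ≤ 1) :
    -log s ≤ (s⁻¹ - s) / 2 := by
  have h := self_le_sinh_iff.2 (neg_nonneg.2 (log_nonpos hs.le hs1))
  rwa [sinh_neg, sinh_log hs, ← neg_div, neg_sub] at h

lemma neg_log_le_inv_sub_one {s : ℝ} (hs : 0 < s) : -log s ≤ s⁻¹ - 1 := by
  simpa only [log_inv] using log_le_sub_one_of_pos (inv_pos.2 hs)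

theorem mul_log_sub_half_log_le {a x : ℝ} (ha : 0 ≤ a) (hx : 0 < x)
    (hs : 0 < 1 - 2 * a * (1 - x)) :
    a * log x - 1 / 2 * log (1 - 2 * a * (1 - x)) ≤
      a ^ 2 * (1 - x) ^ 2 * (1 + 1 / (1 - 2 * a * (1 - x))) := by
  set s := 1 - 2 * a * (1 - x) with hs_def
  have hlog_x : a * log x ≤ a * (x - 1) := mul_le_mul_of_nonneg_left (log_le_sub_one_of_pos hx) ha
  have hsq : 0 ≤ a ^ 2 * (1 - x) ^ 2 := by positivity
  have hrhs : a ^ 2 * (1 - x) ^ 2 * (1 + 1 / s) = a ^ 2 * (1 - x) ^ 2 + a ^ 2 * (1 - x) ^ 2 / s := by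
    ring
  rcases le_total s 1 with hs1 | hs1
  · have hlog_s := neg_log_le_inv_sub_self_div_two hs hs1
    have key : a * (x - 1) + (s⁻¹ - s) / 4 = a ^ 2 * (1 - x) ^ 2 / s := by
      field_simp; rw [hs_def]; ring
    linarith
  · have hlog_s := neg_log_le_inv_sub_one hs
    have key : a * (x - 1) + (s⁻¹ - 1) / 2 = 2 * (a ^ 2 * (1 - x) ^ 2 / s) := by
      field_simp; rw [hs_def]; ring
    linarith [div_le_self hsq hs1]

theorem log_bound_right (k : ℕ) (hk : 0 < k) (x : ℝ)
    (hx : (2 * (k : ℝ) - 1) / (2 * (k : ℝ)) < x) :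
    (k : ℝ) * Real.log x - (1 / 2) * Real.log (1 - 2 * (k : ℝ) * (1 - x)) ≤
      (k : ℝ) ^ 2 * (1 - x) ^ 2 * (1 + 1 / (1 - 2 * (k : ℝ) * (1 - x))) := by
  have hk1 : (1 : ℝ) ≤ k := by exact_mod_cast hk
  rw [div_lt_iff₀ (by positivity)] at hx
  exact mul_log_sub_half_log_le k.cast_nonneg (by nlinarith) (by linarith)
end

section
/- For a single-variable normalized Hermite polynomial H_n (satisfying E_{x~N(0,1)}[H_n(x)²] = 1), the fourth moment satisfies E_{x~N(0,1)}[H_n(x)^4] = Σ_{r=0}^{n} C(n,r)²·(2r)!/(r!)² and this is at most 9^n. -/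
/-!
Stein's identity `E[X p(X)] = E[p'(X)]` for a standard Gaussian `X` gives
`E[(X p - p') q] = E[p q']`. As `He_(a+1) = X He_a - He_a'` and `He_(b+1)' = (b+1) He_b`,
induction yields the orthogonality `E[He_a He_b] = a! δ_ab`. The same recursion proves the
linearization `He_n² = ∑_r C(n,r)² (n-r)! He_(2r)`, so by orthogonality
`E[He_n⁴] = ∑_r (C(n,r)² (n-r)!)² (2r)!`, which is the stated sum times `n!²`.
The bound follows from `(2r)!/r!² = C(2r,r) ≤ 4^r` and `∑ a_r² ≤ (∑ a_r)²`, with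
`∑_r C(n,r) 2^r = 3^n`.
-/

open MeasureTheory ProbabilityTheory

open Polynomial NNReal
open scoped Nat

section Gaussian

variable {R : Type*} [CommSemiring R] [Algebra R ℝ]

lemma integrable_aeval_gaussianReal (p : R[X]) (μ : ℝ) (v : ℝ≥0) :
    Integrable (fun x ↦ aeval x p) (gaussianReal μ v) := by
  have hpow (i : ℕ) : Integrable (fun x : ℝ ↦ x ^ i) (gaussianReal μ v) :=
    integrable_pow_of_mem_interior_integrableExpSet (X := id)
      (by simp [integrableExpSet_id_gaussianReal]) i
  simp_rw [aeval_eq_sum_range, Algebra.smul_def]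
  exact integrable_finsetSum _ fun i _ ↦ (hpow i).const_mul _

lemma integrable_gaussianReal_iff {E : Type*} [NormedAddCommGroup E] [NormedSpace ℝ E]
    {μ : ℝ} {v : ℝ≥0} (hv : v ≠ 0) {f : ℝ → E} :
    Integrable f (gaussianReal μ v) ↔ Integrable (fun x ↦ gaussianPDFReal μ v x • f x) := by
  rw [gaussianReal_of_var_ne_zero _ hv, integrable_withDensity_iff_integrable_smul'
    (measurable_gaussianPDF _ _) (ae_of_all _ fun _ ↦ gaussianPDF_lt_top)]
  simp [toReal_gaussianPDF]

lemma hasDerivAt_gaussianPDFReal (μ : ℝ) (v : ℝ≥0) (x : ℝ) :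
    HasDerivAt (gaussianPDFReal μ v) (-((x - μ) / v) * gaussianPDFReal μ v x) x := by
  have h : HasDerivAt (fun y ↦ (√(2 * Real.pi * v))⁻¹ * Real.exp (-(y - μ) ^ 2 / (2 * v)))
      ((√(2 * Real.pi * v))⁻¹ * (Real.exp (-(x - μ) ^ 2 / (2 * v)) *
        (-(2 * (x - μ)) / (2 * v)))) x := by
    refine ((HasDerivAt.exp ?_).const_mul _)
    simpa using (((hasDerivAt_id x).sub_const μ).pow 2).neg.div_const (2 * (v : ℝ))
  convert h using 1
  · ext y; simp [gaussianPDFReal_def]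
  · simp only [gaussianPDFReal_def]; ring

/-- Stein's identity for polynomials. -/
theorem integral_sub_mul_aeval_gaussianReal (p : R[X]) (μ : ℝ) {v : ℝ≥0} (hv : v ≠ 0) :
    ∫ x, (x - μ) * aeval x p ∂gaussianReal μ v =
      v * ∫ x, aeval x (derivative p) ∂gaussianReal μ v := by
  have hp := integrable_aeval_gaussianReal p μ v
  have hp' := integrable_aeval_gaussianReal (derivative p) μ v
  have hXp : Integrable (fun x ↦ (x - μ) * aeval x p) (gaussianReal μ v) := by
    refine ((integrable_aeval_gaussianReal (X * p) μ v).sub (hp.const_mul μ)).congr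
      (ae_of_all _ fun x ↦ ?_)
    simp [sub_mul]
  rw [integrable_gaussianReal_iff hv] at hp hp' hXp
  have hderiv (x : ℝ) : HasDerivAt (fun y ↦ gaussianPDFReal μ v y * aeval y p)
      (-(v : ℝ)⁻¹ * (gaussianPDFReal μ v x * ((x - μ) * aeval x p)) +
        gaussianPDFReal μ v x * aeval x (derivative p)) x := by
    refine ((hasDerivAt_gaussianPDFReal μ v x).mul (p.hasDerivAt_aeval x)).congr_deriv ?_
    ring
  have hzero := integral_eq_zero_of_hasDerivAt_of_integrable hderiv
    ((hXp.const_mul _).add hp') hp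
  simp only [smul_eq_mul] at hp hp' hXp
  rw [integral_add (hXp.const_mul _) hp', integral_const_mul] at hzero
  simp only [integral_gaussianReal_eq_integral_smul hv, smul_eq_mul]
  rw [neg_mul, neg_add_eq_zero, inv_mul_eq_iff_eq_mul₀ (by exact_mod_cast hv)] at hzero
  exact hzero

noncomputable def gaussianExpect : R[X] →+ ℝ where
  toFun p := ∫ x, aeval x p ∂gaussianReal 0 1
  map_zero' := by simp
  map_add' p q := by
    simp only [map_add]
    exact integral_add (integrable_aeval_gaussianReal p 0 1)
      (integrable_aeval_gaussianReal q 0 1)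

lemma gaussianExpect_apply (p : R[X]) :
    gaussianExpect p = ∫ x, aeval x p ∂gaussianReal 0 1 := rfl

lemma gaussianExpect_X_mul (p : R[X]) :
    gaussianExpect (X * p) = gaussianExpect (derivative p) := by
  simpa [gaussianExpect_apply] using integral_sub_mul_aeval_gaussianReal p 0 one_ne_zero

end Gaussian

lemma choose_succ_mul_choose_succ_mul_factorial (m n k : ℕ) :
    (m + 1).choose (k + 1) * (n + 1).choose (k + 1) * (k + 1)! =
      m.choose (k + 1) * (n + 1).choose (k + 1) * (k + 1)! +
        (n + 1) * (m.choose k * n.choose k * k !) := by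
  have h := (Nat.add_one_mul_choose_eq n k).symm
  rw [Nat.choose_succ_succ, Nat.factorial_succ]
  linear_combination (m.choose k * k !) * h

namespace Polynomial

lemma derivative_hermite_succ (n : ℕ) : derivative (hermite (n + 1)) = (n + 1) • hermite n := by
  induction n with
  | zero => simp
  | succ n ih =>
    rw [hermite_succ (n + 1), derivative_sub, derivative_mul, derivative_X, one_mul, ih,
      derivative_smul, hermite_succ n, mul_smul_comm]
    simp only [smul_sub, succ_nsmul, add_smul]
    abel

noncomputable def hermiteRaise : ℤ[X] →ₗ[ℤ] ℤ[X] := LinearMap.mulLeft ℤ X - derivative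

lemma hermiteRaise_apply (p : ℤ[X]) : hermiteRaise p = X * p - derivative p := rfl

lemma hermiteRaise_hermite (n : ℕ) : hermiteRaise (hermite n) = hermite (n + 1) :=
  (hermite_succ n).symm

lemma hermite_succ_mul (n : ℕ) (q : ℤ[X]) :
    hermite (n + 1) * q = hermiteRaise (hermite n * q) + hermite n * derivative q := by
  rw [hermite_succ, hermiteRaise_apply, derivative_mul]
  ring

theorem hermite_mul_hermite (m n : ℕ) :
    hermite m * hermite n =
      ∑ k ∈ Finset.range (n + 1),
        (m.choose k * n.choose k * k !) • hermite (m + n - 2 * k) := by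
  induction m generalizing n with
  | zero =>
    rw [Finset.sum_eq_single_of_mem 0 (by simp)]
    · simp
    · intro k _ hk
      simp [Nat.choose_eq_zero_of_lt (Nat.pos_of_ne_zero hk)]
  | succ m ih =>
    cases n with
    | zero => simp
    | succ n =>
      rw [hermite_succ_mul, derivative_hermite_succ, mul_smul_comm, ih, ih, map_sum,
        Finset.sum_range_succ', Finset.sum_range_succ' _ (n + 1), Finset.smul_sum]
      simp only [map_nsmul, hermiteRaise_hermite]
      rw [add_right_comm, ← Finset.sum_add_distrib]
      congr 1
      · refine Finset.sum_congr rfl fun k hk ↦ ?_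
        have hk : k ≤ n := Finset.mem_range_succ_iff.mp hk
        have hfirst : (m.choose (k + 1) * (n + 1).choose (k + 1) * (k + 1)!) •
              hermite (m + (n + 1) - 2 * (k + 1) + 1) =
            (m.choose (k + 1) * (n + 1).choose (k + 1) * (k + 1)!) • hermite (m + n - 2 * k) := by
          -- where `m + (n + 1) - 2 * (k + 1)` truncates, `m < k + 1` kills the coefficient
          rcases lt_or_ge m (k + 1) with hm | hm
          · simp [Nat.choose_eq_zero_of_lt hm]
          · congr 2; omega
        rw [hfirst, show m + 1 + (n + 1) - 2 * (k + 1) = m + n - 2 * k by omega, smul_smul,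
          ← add_smul, choose_succ_mul_choose_succ_mul_factorial]
      · simp only [Nat.choose_zero_right, Nat.factorial_zero, mul_one, one_smul]
        congr 1
        omega

lemma hermite_mul_self (n : ℕ) :
    hermite n * hermite n =
      ∑ r ∈ Finset.range (n + 1), (n.choose r ^ 2 * (n - r)!) • hermite (2 * r) := by
  rw [hermite_mul_hermite, ← Finset.sum_range_reflect]
  refine Finset.sum_congr rfl fun k hk ↦ ?_
  have hk : k ≤ n := Finset.mem_range_succ_iff.mp hk
  rw [add_tsub_cancel_right, Nat.choose_symm hk, sq, show n + n - 2 * (n - k) = 2 * k by omega]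

end Polynomial

lemma gaussianExpect_hermiteRaise (p : ℤ[X]) : gaussianExpect (hermiteRaise p) = 0 := by
  rw [hermiteRaise_apply, map_sub, gaussianExpect_X_mul, sub_self]

lemma gaussianExpect_hermite_succ_mul (n : ℕ) (q : ℤ[X]) :
    gaussianExpect (hermite (n + 1) * q) = gaussianExpect (hermite n * derivative q) := by
  rw [hermite_succ_mul, map_add, gaussianExpect_hermiteRaise, zero_add]

theorem gaussianExpect_hermite_mul_hermite (a b : ℕ) :
    gaussianExpect (hermite a * hermite b) = if a = b then (a ! : ℝ) else 0 := by
  induction a generalizing b with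
  | zero =>
    cases b with
    | zero => simp [gaussianExpect_apply]
    | succ b => rw [mul_comm, gaussianExpect_hermite_succ_mul]; simp
  | succ a ih =>
    cases b with
    | zero => rw [gaussianExpect_hermite_succ_mul]; simp
    | succ b =>
      rw [gaussianExpect_hermite_succ_mul, derivative_hermite_succ, mul_smul_comm, map_nsmul, ih]
      rcases eq_or_ne a b with rfl | hab
      · simp [Nat.factorial_succ]
      · simp [hab]

theorem gaussianExpect_sum_nsmul_hermite_sq {ι : Type*} (s : Finset ι) (c d : ι → ℕ)
    (hd : Set.InjOn d s) :
    gaussianExpect ((∑ i ∈ s, c i • hermite (d i)) ^ 2) =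
      ∑ i ∈ s, (c i : ℝ) ^ 2 * (d i)! := by
  rw [sq, Finset.sum_mul_sum, map_sum]
  refine Finset.sum_congr rfl fun i hi ↦ ?_
  rw [map_sum, Finset.sum_eq_single_of_mem i hi]
  · rw [smul_mul_smul_comm, map_nsmul, gaussianExpect_hermite_mul_hermite, if_pos rfl]
    simp [sq, mul_assoc]
  · intro j hj hji
    rw [smul_mul_smul_comm, map_nsmul, gaussianExpect_hermite_mul_hermite,
      if_neg fun h ↦ hji (hd hj hi h.symm), nsmul_zero]

lemma cast_factorial_two_mul_div_sq (r : ℕ) :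
    ((2 * r)! : ℝ) / (r ! : ℝ) ^ 2 = r.centralBinom := by
  have h := Nat.choose_mul_factorial_mul_factorial (show r ≤ 2 * r by omega)
  rw [show 2 * r - r = r by omega, ← Nat.centralBinom_eq_two_mul_choose] at h
  rw [div_eq_iff (by positivity), ← h]
  push_cast
  ring

lemma sum_choose_mul_two_pow (n : ℕ) :
    ∑ r ∈ Finset.range (n + 1), n.choose r * 2 ^ r = 3 ^ n := by
  simpa [mul_comm] using (add_pow (2 : ℕ) 1 n).symm

lemma sum_choose_sq_mul_centralBinom_le (n : ℕ) :
    ∑ r ∈ Finset.range (n + 1), n.choose r ^ 2 * r.centralBinom ≤ 9 ^ n :=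
  calc ∑ r ∈ Finset.range (n + 1), n.choose r ^ 2 * r.centralBinom
      ≤ ∑ r ∈ Finset.range (n + 1), (n.choose r * 2 ^ r) ^ 2 := by
        gcongr with r
        rw [mul_pow, ← pow_mul, mul_comm r, pow_mul]
        exact Nat.mul_le_mul_left _ (Nat.centralBinom_le_four_pow r)
    _ ≤ (∑ r ∈ Finset.range (n + 1), n.choose r * 2 ^ r) ^ 2 :=
        Finset.sum_sq_le_sq_sum_of_nonneg fun _ _ ↦ Nat.zero_le _
    _ = 9 ^ n := by rw [sum_choose_mul_two_pow, ← pow_mul, mul_comm, pow_mul]; norm_num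

lemma cast_choose_sq_mul_factorial_sq_div (n r : ℕ) (hr : r ≤ n) :
    ((n.choose r ^ 2 * (n - r)! : ℕ) : ℝ) ^ 2 * (2 * r)! / (n ! : ℝ) ^ 2 =
      (n.choose r : ℝ) ^ 2 * (2 * r)! / (r ! : ℝ) ^ 2 := by
  have h : (n ! : ℝ) = n.choose r * r ! * (n - r)! := by
    exact_mod_cast (Nat.choose_mul_factorial_mul_factorial hr).symm
  rw [h]
  push_cast
  field_simp

theorem normalized_hermite_fourth_moment (n : ℕ) :
    (∫ x, (((Polynomial.hermite n).aeval x : ℝ) / Real.sqrt (n.factorial)) ^ 4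
        ∂(gaussianReal 0 1)) =
      ∑ r ∈ Finset.range (n + 1),
        (n.choose r : ℝ) ^ 2 * ((2 * r).factorial : ℝ) / ((r.factorial : ℝ) ^ 2) ∧
    (∑ r ∈ Finset.range (n + 1),
        (n.choose r : ℝ) ^ 2 * ((2 * r).factorial : ℝ) / ((r.factorial : ℝ) ^ 2)) ≤ 9 ^ n := by
  constructor
  · have hpow (x : ℝ) : (aeval x (hermite n) / √(n ! : ℝ)) ^ 4 =
        aeval x ((hermite n * hermite n) ^ 2) / (n ! : ℝ) ^ 2 := by
      have hsqrt : √(n ! : ℝ) ^ 4 = (n ! : ℝ) ^ 2 := by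
        rw [show 4 = 2 * 2 from rfl, pow_mul, Real.sq_sqrt (by positivity)]
      rw [div_pow, hsqrt, map_pow, map_mul]
      ring
    simp_rw [hpow]
    have hinj : Set.InjOn (2 * ·) (Finset.range (n + 1) : Set ℕ) :=
      Set.injOn_of_injective (mul_right_injective₀ two_ne_zero)
    rw [integral_div, ← gaussianExpect_apply, hermite_mul_self,
      gaussianExpect_sum_nsmul_hermite_sq _ _ _ hinj, Finset.sum_div]
    exact Finset.sum_congr rfl fun r hr ↦
      cast_choose_sq_mul_factorial_sq_div n r (Finset.mem_range_succ_iff.mp hr)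
  · simp_rw [mul_div_assoc, cast_factorial_two_mul_div_sq]
    exact_mod_cast sum_choose_sq_mul_centralBinom_le n
end

section
/- Let P and Q be probability measures on ℝ^d with everywhere positive densities, and ℓ: ℝ^d → ℝ a measurable function with ℓ² integrable under both. Then |E_P[ℓ] − E_Q[ℓ]| ≤ 2·√(E_P[ℓ²] + E_Q[ℓ²])·√(d_TV(P,Q)), where d_TV is the total variation distance. -/
/-!
Write `E_P[ℓ] - E_Q[ℓ] = ∫ ℓ (p - q)` and split the integrand as
`(|ℓ| √(p + q)) · √|p - q|`, which dominates `|ℓ (p - q)|` because `|p - q| ≤ p + q`.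
Cauchy–Schwarz bounds the integral by `√(∫ ℓ² (p + q)) · √(∫ |p - q|)`, that is by
`√(E_P[ℓ²] + E_Q[ℓ²]) · √(2 d_TV(P, Q))`, and `√2 ≤ 2`.
-/

open MeasureTheory

theorem abs_sub_mul_le_sqrt_mul_sqrt {a b : ℝ} (ha : 0 ≤ a) (hb : 0 ≤ b) (l : ℝ) :
    |(a - b) * l| ≤ √((a + b) * l ^ 2) * √|a - b| := by
  have hab : |a - b| ≤ a + b := abs_sub_le_iff.2 ⟨by linarith, by linarith⟩
  calc |(a - b) * l| = √(((a - b) * l) ^ 2) := (Real.sqrt_sq_eq_abs _).symm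
    _ ≤ √((a + b) * l ^ 2 * |a - b|) := by
        refine Real.sqrt_le_sqrt ?_
        rw [mul_pow, ← sq_abs (a - b)]
        nlinarith [mul_nonneg (sq_nonneg l) (abs_nonneg (a - b))]
    _ = √((a + b) * l ^ 2) * √|a - b| := Real.sqrt_mul (by positivity) _

theorem Real.sqrt_le_two_mul_sqrt_half_mul (t : ℝ) : √t ≤ 2 * √(1 / 2 * t) :=
  calc √t = √2 * √(1 / 2 * t) := by
        rw [← Real.sqrt_mul zero_le_two]
        ring_nf
    _ ≤ 2 * √(1 / 2 * t) := by
        gcongr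
        rw [Real.sqrt_le_left zero_le_two]
        norm_num

namespace MeasureTheory

variable {α : Type*} [MeasurableSpace α] {μ : Measure α}

theorem integral_withDensity_ofReal {p : α → ℝ} (hp : Measurable p) (hp0 : 0 ≤ᵐ[μ] p)
    (g : α → ℝ) :
    ∫ x, g x ∂μ.withDensity (fun x => ENNReal.ofReal (p x)) = ∫ x, p x * g x ∂μ := by
  rw [integral_withDensity_eq_integral_toReal_smul hp.ennreal_ofReal
    (.of_forall fun _ => ENNReal.ofReal_lt_top)]
  refine integral_congr_ae ?_
  filter_upwards [hp0] with x hx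
  rw [ENNReal.toReal_ofReal hx, smul_eq_mul]

theorem integrable_withDensity_ofReal_iff {p : α → ℝ} (hp : Measurable p) (hp0 : 0 ≤ᵐ[μ] p)
    {g : α → ℝ} :
    Integrable g (μ.withDensity fun x => ENNReal.ofReal (p x)) ↔
      Integrable (fun x => p x * g x) μ := by
  rw [integrable_withDensity_iff_integrable_smul' hp.ennreal_ofReal
    (.of_forall fun _ => ENNReal.ofReal_lt_top)]
  refine integrable_congr ?_
  filter_upwards [hp0] with x hx
  rw [ENNReal.toReal_ofReal hx, smul_eq_mul]

theorem integral_mul_le_sqrt_integral_sq_mul_sqrt_integral_sq {f g : α → ℝ}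
    (hf0 : 0 ≤ᵐ[μ] f) (hg0 : 0 ≤ᵐ[μ] g) (hf : MemLp f 2 μ) (hg : MemLp g 2 μ) :
    ∫ x, f x * g x ∂μ ≤ √(∫ x, f x ^ 2 ∂μ) * √(∫ x, g x ^ 2 ∂μ) := by
  have h2 : ENNReal.ofReal 2 = 2 := by norm_num
  have := integral_mul_le_Lp_mul_Lq_of_nonneg Real.HolderConjugate.two_two hf0 hg0
    (h2 ▸ hf) (h2 ▸ hg)
  simpa [Real.sqrt_eq_rpow] using this

theorem abs_integral_sub_mul_le_sqrt_mul_sqrt {p q ℓ : α → ℝ} (hp0 : 0 ≤ᵐ[μ] p)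
    (hq0 : 0 ≤ᵐ[μ] q) (hpq : Integrable (p - q) μ)
    (hℓ : Integrable (fun x => (p x + q x) * ℓ x ^ 2) μ) :
    |∫ x, (p x - q x) * ℓ x ∂μ| ≤
      √(∫ x, (p x + q x) * ℓ x ^ 2 ∂μ) * √(∫ x, |p x - q x| ∂μ) := by
  set F : α → ℝ := fun x => √((p x + q x) * ℓ x ^ 2)
  set G : α → ℝ := fun x => √|p x - q x|
  have hF_sq : (fun x => F x ^ 2) =ᵐ[μ] fun x => (p x + q x) * ℓ x ^ 2 := by
    filter_upwards [hp0, hq0] with x hpx hqx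
    exact Real.sq_sqrt (mul_nonneg (add_nonneg hpx hqx) (sq_nonneg _))
  have hF : MemLp F 2 μ :=
    (memLp_two_iff_integrable_sq (Real.continuous_sqrt.comp_aestronglyMeasurable
      hℓ.aestronglyMeasurable)).2 (hℓ.congr hF_sq.symm)
  have hG_sq : (fun x => G x ^ 2) = fun x => |p x - q x| :=
    funext fun x => Real.sq_sqrt (abs_nonneg _)
  have hG : MemLp G 2 μ :=
    (memLp_two_iff_integrable_sq (Real.continuous_sqrt.comp_aestronglyMeasurable
      hpq.abs.aestronglyMeasurable)).2 (hG_sq ▸ hpq.abs)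
  calc |∫ x, (p x - q x) * ℓ x ∂μ|
      ≤ ∫ x, |(p x - q x) * ℓ x| ∂μ := abs_integral_le_integral_abs
    _ ≤ ∫ x, F x * G x ∂μ := by
        refine integral_mono_of_nonneg (.of_forall fun x => abs_nonneg _)
          (hF.integrable_mul hG) ?_
        filter_upwards [hp0, hq0] with x hpx hqx
        exact abs_sub_mul_le_sqrt_mul_sqrt hpx hqx (ℓ x)
    _ ≤ √(∫ x, F x ^ 2 ∂μ) * √(∫ x, G x ^ 2 ∂μ) :=
        integral_mul_le_sqrt_integral_sq_mul_sqrt_integral_sq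
          (.of_forall fun _ => Real.sqrt_nonneg _) (.of_forall fun _ => Real.sqrt_nonneg _) hF hG
    _ = √(∫ x, (p x + q x) * ℓ x ^ 2 ∂μ) * √(∫ x, |p x - q x| ∂μ) := by
        rw [integral_congr_ae hF_sq, hG_sq]

end MeasureTheory

theorem expectation_diff_le_tv_general (d : ℕ) (P Q : Measure (Fin d → ℝ))
    [IsProbabilityMeasure P] [IsProbabilityMeasure Q]
    (p q : (Fin d → ℝ) → ℝ) (hp : Measurable p) (hq : Measurable q)
    (hppos : ∀ x, 0 < p x) (hqpos : ∀ x, 0 < q x)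
    (hP : P = volume.withDensity fun x => ENNReal.ofReal (p x))
    (hQ : Q = volume.withDensity fun x => ENNReal.ofReal (q x))
    (ℓ : (Fin d → ℝ) → ℝ)
    (hℓP : Integrable ℓ P) (hℓQ : Integrable ℓ Q)
    (hℓ2P : Integrable (fun x => ℓ x ^ 2) P) (hℓ2Q : Integrable (fun x => ℓ x ^ 2) Q) :
    |(∫ x, ℓ x ∂P) - ∫ x, ℓ x ∂Q| ≤
      2 * Real.sqrt ((∫ x, ℓ x ^ 2 ∂P) + ∫ x, ℓ x ^ 2 ∂Q) *
        Real.sqrt ((1 / 2) * ∫ x, |p x - q x|) := by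
  subst hP hQ
  have hp0 : 0 ≤ᵐ[volume] p := .of_forall fun x => (hppos x).le
  have hq0 : 0 ≤ᵐ[volume] q := .of_forall fun x => (hqpos x).le
  have hp_int : Integrable p := by
    simpa using (integrable_withDensity_ofReal_iff hp hp0).1 (integrable_const (1 : ℝ))
  have hq_int : Integrable q := by
    simpa using (integrable_withDensity_ofReal_iff hq hq0).1 (integrable_const (1 : ℝ))
  rw [integrable_withDensity_ofReal_iff hp hp0] at hℓP hℓ2P
  rw [integrable_withDensity_ofReal_iff hq hq0] at hℓQ hℓ2Q
  simp only [integral_withDensity_ofReal hp hp0, integral_withDensity_ofReal hq hq0,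
    ← integral_sub hℓP hℓQ, ← integral_add hℓ2P hℓ2Q, ← sub_mul, ← add_mul]
  calc _ ≤ √(∫ x, (p x + q x) * ℓ x ^ 2) * √(∫ x, |p x - q x|) :=
        abs_integral_sub_mul_le_sqrt_mul_sqrt hp0 hq0 (hp_int.sub hq_int)
          (by simp_rw [add_mul]; exact hℓ2P.add hℓ2Q)
    _ ≤ √(∫ x, (p x + q x) * ℓ x ^ 2) * (2 * √(1 / 2 * ∫ x, |p x - q x|)) := by
        gcongr
        exact Real.sqrt_le_two_mul_sqrt_half_mul _
    _ = _ := by ring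

theorem expectation_diff_le_tv (d : ℕ) (P Q : Measure (Fin d → ℝ))
    [IsProbabilityMeasure P] [IsProbabilityMeasure Q]
    (p q : (Fin d → ℝ) → ℝ) (hp : Measurable p) (hq : Measurable q)
    (hppos : ∀ x, 0 < p x) (hqpos : ∀ x, 0 < q x)
    (hP : P = volume.withDensity fun x => ENNReal.ofReal (p x))
    (hQ : Q = volume.withDensity fun x => ENNReal.ofReal (q x))
    (ℓ : (Fin d → ℝ) → ℝ) (hℓ : Measurable ℓ)
    (hℓP : Integrable ℓ P) (hℓQ : Integrable ℓ Q)
    (hℓ2P : Integrable (fun x => ℓ x ^ 2) P) (hℓ2Q : Integrable (fun x => ℓ x ^ 2) Q) :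
    |(∫ x, ℓ x ∂P) - ∫ x, ℓ x ∂Q| ≤
      2 * Real.sqrt ((∫ x, ℓ x ^ 2 ∂P) + ∫ x, ℓ x ^ 2 ∂Q) *
        Real.sqrt ((1 / 2) * ∫ x, |p x - q x|) :=
  expectation_diff_le_tv_general d P Q p q hp hq hppos hqpos hP hQ ℓ hℓP hℓQ hℓ2P hℓ2Q
end

section
/- Let N₁ = N(0, I_d) and N₂ = N(μ, Λ) with Λ = diag(λ₁,...,λ_d), λᵢ > 0. Define N = N(0, R) with R = diag(max(1,λ₁),...,max(1,λ_d)). Then the chi-squared divergences satisfy χ²(N₂‖N) ≤ exp(2‖Λ^{-1/2}μ‖₂² + ‖Λ⁻¹ − I‖_F²) − 1 and χ²(N₁‖N) ≤ exp((1/2)·max(1,‖Λ‖₂)·‖Λ⁻¹ − I‖_F²) − 1. In particular both divergences are finite. -/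
/-!
All three densities are products over the coordinates, so each χ² integral factors into
one-dimensional integrals `∫ φ_{m,v}² / φ_{0,w}`. Completing the square evaluates such an
integral as `w / √(v (2w - v)) · exp (m² / (2w - v))`, finite because `v < 2w` when
`w = max 1 v`. Squaring the prefactor, elementary inequalities bound it by `1 + 2y` for the
exponent `y` of the claimed bound, and `1 + 2y ≤ exp (2y)` finishes each factor.
-/

open MeasureTheory ProbabilityTheory Real
open scoped NNReal

lemma exp_neg_mul_sq_add_mul_add_eq {a : ℝ} (ha : a ≠ 0) (b c x : ℝ) :
    exp (-a * x ^ 2 + b * x + c) =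
      exp (b ^ 2 / (4 * a) + c) * exp (-a * (x - b / (2 * a)) ^ 2) := by
  rw [← exp_add]
  congr 1
  field_simp
  ring

lemma integrable_exp_neg_mul_sq_add_mul_add {a : ℝ} (ha : 0 < a) (b c : ℝ) :
    Integrable fun x : ℝ => exp (-a * x ^ 2 + b * x + c) := by
  simp only [exp_neg_mul_sq_add_mul_add_eq ha.ne']
  exact ((integrable_exp_neg_mul_sq ha).comp_sub_right _).const_mul _

lemma integral_exp_neg_mul_sq_add_mul_add {a : ℝ} (ha : 0 < a) (b c : ℝ) :
    ∫ x : ℝ, exp (-a * x ^ 2 + b * x + c) = √(π / a) * exp (b ^ 2 / (4 * a) + c) := by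
  simp only [exp_neg_mul_sq_add_mul_add_eq ha.ne']
  rw [integral_const_mul, integral_sub_right_eq_self (fun y => exp (-a * y ^ 2)),
    integral_gaussian, mul_comm]

section OneDim

variable {v w : ℝ≥0}

lemma gaussianPDFReal_sq_div_gaussianPDFReal_zero (hv : v ≠ 0) (hw : w ≠ 0) (m x : ℝ) :
    gaussianPDFReal m v x ^ 2 / gaussianPDFReal 0 w x =
      √(2 * π * w) / (2 * π * v) *
        exp (-(1 / v - 1 / (2 * w)) * x ^ 2 + 2 * m / v * x + -(m ^ 2 / v)) := by
  have hv' : (0 : ℝ) < v := by positivity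
  have hw' : (0 : ℝ) < w := by positivity
  have hexp : -(1 / v - 1 / (2 * w)) * x ^ 2 + 2 * m / v * x + -(m ^ 2 / v) =
      (-(x - m) ^ 2 / (2 * v) + -(x - m) ^ 2 / (2 * v)) - -(x - 0) ^ 2 / (2 * w) := by
    field_simp
    ring
  rw [hexp, exp_sub, exp_add, gaussianPDFReal, gaussianPDFReal, mul_pow, inv_pow,
    sq_sqrt (by positivity)]
  field_simp

lemma one_div_sub_one_div_two_mul_pos (hv : v ≠ 0) (hvw : (v : ℝ) < 2 * w) :
    0 < 1 / (v : ℝ) - 1 / (2 * w) :=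
  sub_pos.2 (one_div_lt_one_div_of_lt (by positivity) hvw)

lemma ne_zero_of_coe_lt_two_mul (hvw : (v : ℝ) < 2 * w) : w ≠ 0 := by
  rintro rfl
  simp only [NNReal.coe_zero, mul_zero] at hvw
  exact v.coe_nonneg.not_gt hvw

lemma integrable_gaussianPDFReal_sq_div_gaussianPDFReal_zero (hv : v ≠ 0)
    (hvw : (v : ℝ) < 2 * w) (m : ℝ) :
    Integrable fun x => gaussianPDFReal m v x ^ 2 / gaussianPDFReal 0 w x := by
  simp only [gaussianPDFReal_sq_div_gaussianPDFReal_zero hv (ne_zero_of_coe_lt_two_mul hvw)]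
  exact (integrable_exp_neg_mul_sq_add_mul_add
    (one_div_sub_one_div_two_mul_pos hv hvw) _ _).const_mul _

lemma integral_gaussianPDFReal_sq_div_gaussianPDFReal_zero (hv : v ≠ 0)
    (hvw : (v : ℝ) < 2 * w) (m : ℝ) :
    ∫ x, gaussianPDFReal m v x ^ 2 / gaussianPDFReal 0 w x =
      w / √(v * (2 * w - v)) * exp (m ^ 2 / (2 * w - v)) := by
  have ha := one_div_sub_one_div_two_mul_pos hv hvw
  have hv' : (0 : ℝ) < v := by positivity
  have hw' : (0 : ℝ) < w := by linarith
  have h2wv : (0 : ℝ) < 2 * w - v := by linarith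
  have hexp : (2 * m / v) ^ 2 / (4 * (1 / v - 1 / (2 * w))) + -(m ^ 2 / v) =
      m ^ 2 / (2 * w - v) := by
    field_simp
    ring
  have hconst : √(2 * π * w) / (2 * π * v) * √(π / (1 / v - 1 / (2 * w))) =
      w / √(v * (2 * w - v)) := by
    rw [← sq_eq_sq₀ (by positivity) (by positivity), mul_pow, div_pow, div_pow,
      sq_sqrt (by positivity), sq_sqrt (div_pos pi_pos ha).le, sq_sqrt (by positivity)]
    field_simp
  simp only [gaussianPDFReal_sq_div_gaussianPDFReal_zero hv (ne_zero_of_coe_lt_two_mul hvw)]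
  rw [integral_const_mul, integral_exp_neg_mul_sq_add_mul_add ha, hexp, ← mul_assoc, hconst]

end OneDim

lemma le_exp_of_sq_le_one_add_two_mul {x y : ℝ} (h : x ^ 2 ≤ 1 + 2 * y) : x ≤ exp y := by
  refine (le_abs_self x).trans (abs_le_of_sq_le_sq ?_ (exp_pos y).le)
  calc x ^ 2 ≤ 1 + 2 * y := h
    _ ≤ exp (2 * y) := by linarith [add_one_le_exp (2 * y)]
    _ = exp y ^ 2 := by rw [← exp_nat_mul]; norm_num

lemma max_one_sq_div_mul_two_mul_max_one_sub_le {l : ℝ} (hl : 0 < l) :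
    max 1 l ^ 2 / (l * (2 * max 1 l - l)) ≤ 1 + 2 * (1 / l - 1) ^ 2 := by
  rcases le_total l 1 with hl1 | hl1
  · rw [max_eq_left hl1, div_le_iff₀ (by nlinarith)]
    have hq : (1 / l - 1) ^ 2 * l ^ 2 = (1 - l) ^ 2 := by rw [← mul_pow]; field_simp
    nlinarith [mul_nonneg (mul_nonneg (sq_nonneg (1 / l - 1)) hl.le)
      (by linarith : (0:ℝ) ≤ 4 - 3 * l)]
  · rw [max_eq_right hl1, show l * (2 * l - l) = l ^ 2 by ring, div_self (by positivity)]
    nlinarith [sq_nonneg (1 / l - 1)]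

lemma max_one_sq_div_two_mul_max_one_sub_one_le {l M : ℝ} (hl : 0 < l) (hlM : l ≤ M) :
    max 1 l ^ 2 / (2 * max 1 l - 1) ≤ 1 + M * (1 / l - 1) ^ 2 := by
  rcases le_total l 1 with hl1 | hl1
  · rw [max_eq_left hl1]
    nlinarith [sq_nonneg (1 / l - 1)]
  · rw [max_eq_right hl1, div_le_iff₀ (by linarith)]
    have hq : (1 / l - 1) * l = 1 - l := by field_simp
    have hMt : l * (1 / l - 1) ^ 2 ≤ M * (1 / l - 1) ^ 2 :=
      mul_le_mul_of_nonneg_right hlM (sq_nonneg _)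
    nlinarith [sq_nonneg (l - 1),
      mul_nonneg (mul_nonneg (sub_nonneg.2 hl1) (sub_nonneg.2 hl1)) (sub_nonneg.2 hl1)]

lemma coe_lt_two_mul_max_one_of_le {a v : ℝ≥0} (ha : a ≤ max 1 v) :
    (a : ℝ) < 2 * ↑(max 1 v) := by
  have h1 : (1 : ℝ) ≤ ↑(max 1 v) := NNReal.coe_le_coe.2 (le_max_left 1 v)
  linarith [NNReal.coe_le_coe.2 ha]

lemma integral_gaussianPDFReal_sq_div_max_one_le (m : ℝ) {v : ℝ≥0} (hv : v ≠ 0) :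
    ∫ x, gaussianPDFReal m v x ^ 2 / gaussianPDFReal 0 (max 1 v) x ≤
      exp (2 * (m ^ 2 / v) + (1 / v - 1) ^ 2) := by
  have hv' : (0 : ℝ) < v := by positivity
  have hvw := coe_lt_two_mul_max_one_of_le (le_max_right 1 v)
  rw [integral_gaussianPDFReal_sq_div_gaussianPDFReal_zero hv hvw, NNReal.coe_max,
    NNReal.coe_one, exp_add, mul_comm (exp _)]
  refine mul_le_mul (le_exp_of_sq_le_one_add_two_mul ?_) (exp_le_exp.2 ?_)
    (exp_pos _).le (exp_pos _).le
  · rw [div_pow, sq_sqrt (mul_nonneg hv'.le (by linarith [le_max_right 1 (v : ℝ)]))]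
    exact max_one_sq_div_mul_two_mul_max_one_sub_le hv'
  · have h : m ^ 2 / (2 * max 1 (v : ℝ) - v) ≤ m ^ 2 / v :=
      div_le_div_of_nonneg_left (sq_nonneg m) hv' (by linarith [le_max_right 1 (v : ℝ)])
    linarith [div_nonneg (sq_nonneg m) hv'.le]

lemma integral_gaussianPDFReal_zero_one_sq_div_max_one_le {v : ℝ≥0} {M : ℝ} (hv : v ≠ 0)
    (hvM : v ≤ M) :
    ∫ x, gaussianPDFReal 0 1 x ^ 2 / gaussianPDFReal 0 (max 1 v) x ≤
      exp (1 / 2 * M * (1 / v - 1) ^ 2) := by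
  have hvw := coe_lt_two_mul_max_one_of_le (le_max_left 1 v)
  rw [integral_gaussianPDFReal_sq_div_gaussianPDFReal_zero one_ne_zero hvw, NNReal.coe_max,
    NNReal.coe_one, zero_pow two_ne_zero, zero_div, exp_zero, mul_one, one_mul]
  refine le_exp_of_sq_le_one_add_two_mul ?_
  rw [div_pow, sq_sqrt (by linarith [le_max_left 1 (v : ℝ)])]
  convert max_one_sq_div_two_mul_max_one_sub_one_le (by positivity) hvM using 1
  ring

lemma integrable_and_integral_prod_sq_div_prod_le {ι : Type*} [Fintype ι] {f g : ι → ℝ → ℝ}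
    {b : ι → ℝ} (hg : ∀ i t, 0 ≤ g i t) (hint : ∀ i, Integrable fun t => f i t ^ 2 / g i t)
    (hle : ∀ i, ∫ t, f i t ^ 2 / g i t ≤ exp (b i)) :
    Integrable (fun x : ι → ℝ => (∏ i, f i (x i)) ^ 2 / ∏ i, g i (x i)) ∧
      ∫ x : ι → ℝ, (∏ i, f i (x i)) ^ 2 / ∏ i, g i (x i) ≤ exp (∑ i, b i) := by
  simp only [← Finset.prod_pow, ← Finset.prod_div_distrib]
  refine ⟨Integrable.fintype_prod hint, ?_⟩
  rw [integral_fintype_prod_volume_eq_prod (fun i t => f i t ^ 2 / g i t), exp_sum]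
  exact Finset.prod_le_prod
    (fun i _ => integral_nonneg fun t => div_nonneg (sq_nonneg _) (hg i t)) fun i _ => hle i

theorem chi_squared_common_gaussian (d : ℕ) (μ l : Fin d → ℝ) (hl : ∀ i, 0 < l i) :
    let f₁ : (Fin d → ℝ) → ℝ := fun x =>
      ∏ i, (Real.sqrt (2 * Real.pi))⁻¹ * Real.exp (-(x i) ^ 2 / 2)
    let f₂ : (Fin d → ℝ) → ℝ := fun x =>
      ∏ i, (Real.sqrt (2 * Real.pi * l i))⁻¹ * Real.exp (-(x i - μ i) ^ 2 / (2 * l i))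
    let g : (Fin d → ℝ) → ℝ := fun x =>
      ∏ i, (Real.sqrt (2 * Real.pi * max 1 (l i)))⁻¹ *
        Real.exp (-(x i) ^ 2 / (2 * max 1 (l i)))
    (Integrable (fun x => (f₂ x) ^ 2 / g x) ∧
      (∫ x, (f₂ x) ^ 2 / g x) - 1 ≤
        Real.exp (2 * ∑ i, (μ i) ^ 2 / l i + ∑ i, (1 / l i - 1) ^ 2) - 1) ∧
    (Integrable (fun x => (f₁ x) ^ 2 / g x) ∧
      (∫ x, (f₁ x) ^ 2 / g x) - 1 ≤
        Real.exp ((1 / 2) * max 1 (⨆ i, l i) * ∑ i, (1 / l i - 1) ^ 2) - 1) := by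
  intro f₁ f₂ g
  let v : Fin d → ℝ≥0 := fun i => (l i).toNNReal
  have hv : ∀ i, v i ≠ 0 := fun i => (Real.toNNReal_pos.2 (hl i)).ne'
  have hvl : ∀ i, (v i : ℝ) = l i := fun i => Real.coe_toNNReal _ (hl i).le
  have hf₁ : f₁ = fun x => ∏ i, gaussianPDFReal 0 1 (x i) := by
    simp only [f₁, gaussianPDFReal, NNReal.coe_one, mul_one, sub_zero]
  have hf₂ : f₂ = fun x => ∏ i, gaussianPDFReal (μ i) (v i) (x i) := by
    simp only [f₂, gaussianPDFReal, hvl]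
  have hg : g = fun x => ∏ i, gaussianPDFReal 0 (max 1 (v i)) (x i) := by
    simp only [g, gaussianPDFReal, NNReal.coe_max, NNReal.coe_one, hvl, sub_zero]
  have hlM : ∀ i, l i ≤ max 1 (⨆ i, l i) := fun i =>
    (le_ciSup (Set.finite_range l).bddAbove i).trans (le_max_right _ _)
  obtain ⟨hint₂, hle₂⟩ := integrable_and_integral_prod_sq_div_prod_le
    (fun i => gaussianPDFReal_nonneg 0 _)
    (fun i => integrable_gaussianPDFReal_sq_div_gaussianPDFReal_zero (hv i)
      (coe_lt_two_mul_max_one_of_le (le_max_right 1 (v i))) (μ i))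
    (fun i => integral_gaussianPDFReal_sq_div_max_one_le (μ i) (hv i))
  obtain ⟨hint₁, hle₁⟩ := integrable_and_integral_prod_sq_div_prod_le
    (fun i => gaussianPDFReal_nonneg 0 _)
    (fun i => integrable_gaussianPDFReal_sq_div_gaussianPDFReal_zero one_ne_zero
      (coe_lt_two_mul_max_one_of_le (le_max_left 1 (v i))) 0)
    (fun i => integral_gaussianPDFReal_zero_one_sq_div_max_one_le (hv i)
      ((hvl i).trans_le (hlM i)))
  simp only [hvl] at hle₁ hle₂
  rw [← Finset.mul_sum] at hle₁
  rw [Finset.sum_add_distrib, ← Finset.mul_sum] at hle₂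
  simp only [hf₁, hf₂, hg]
  exact ⟨⟨hint₂, by linarith⟩, hint₁, by linarith⟩
end
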